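/- For every q ∈ ℂ with 0 < |q| < 0.6 and arg(q) ∈ [π/2, π], and every x ∈ ℂ with |x| = |q|^{-5/2}, one has θ(q,x) ≠ 0. -/

import Mathlib

set_option maxHeartbeats 2000000 in
lemma coreAux (p s t : ℝ) (hp : 0 ≤ p) (hps : p ≤ s) (hr : p^2+s^2 ≤ 3/5) (ht : t^2 ≤ 4) :
    1/25 ≤ (1 + t*p + (t^2-2)*(p^4 - 6*p^2*s^2 + s^4))^2
         + (t*s + (t^2-2)*(4*p*s*(p^2-s^2)))^2 := by
  have hs : 0 ≤ s := le_trans hp hps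
  rcases le_total 0 t with ht0 | ht0
  · have hRE : (1:ℝ)/5 ≤ 1 + t*p + (t^2-2)*(p^4 - 6*p^2*s^2 + s^4) := by
      nlinarith [sq_nonneg (p^2+s^2), sq_nonneg (p^2-s^2), sq_nonneg (p*s),
        mul_nonneg (mul_nonneg hp hp) (mul_nonneg (le_trans hp hps) (le_trans hp hps)),
        sq_nonneg (t*(p^2+s^2)), mul_nonneg ht0 hp,
        sq_nonneg ((t^2-2)*(p^4-6*p^2*s^2+s^4))]
    nlinarith [hRE, sq_nonneg (t*s + (t^2-2)*(4*p*s*(p^2-s^2))),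
      sq_nonneg (1 + t*p + (t^2-2)*(p^4 - 6*p^2*s^2 + s^4) - 1/5)]
  · rcases le_total (t^2) 2 with ht2 | ht2
    · have hRE : (1:ℝ)/5 ≤ 1 + t*p + (t^2-2)*(p^4 - 6*p^2*s^2 + s^4) := by
        set g : ℝ := p^4 - 6*p^2*s^2 + s^4 with hg
        have hamgm : t*p ≥ -(t^2/4 + p^2) := by nlinarith [sq_nonneg (t/2 + p)]
        have hA : p^2 + 1/2 ≤ 4/5 := by nlinarith [mul_nonneg hp hp, sq_nonneg (s-p)]
        have hB : p^2 + 2*g ≤ 4/5 := by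
          rcases le_total ((1:ℝ)/8) (p^2+s^2) with h | h
          · nlinarith [mul_nonneg (mul_nonneg hp hp) (sq_nonneg s), sq_nonneg (p*(s-p)),
              sq_nonneg (p*(s+p)), mul_nonneg (mul_nonneg hp hp) (mul_nonneg hp hp)]
          · nlinarith [sq_nonneg (p*(s-p)), sq_nonneg (p*(s+p)), sq_nonneg (p^2+s^2),
              mul_nonneg hp hp]
        have h2a : 0 ≤ 2 - t^2 := by linarith
        have c1 : 0 ≤ (2 - t^2) * (4/5 - (p^2 + 2*g)) / 2 :=
          div_nonneg (mul_nonneg h2a (by linarith)) (by norm_num)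
        have c2 : 0 ≤ t^2 * (4/5 - (p^2 + 1/2)) / 2 :=
          div_nonneg (mul_nonneg (sq_nonneg t) (by linarith)) (by norm_num)
        linarith [c1, c2, hamgm]
      nlinarith [hRE, sq_nonneg (t*s + (t^2-2)*(4*p*s*(p^2-s^2))),
        sq_nonneg (1 + t*p + (t^2-2)*(p^4 - 6*p^2*s^2 + s^4) - 1/5)]
    · have ht1 : t ≤ -1 := by nlinarith [sq_nonneg (t+1)]
      rcases le_total s (1/5) with hs5 | hs5
      · have hRE : (1:ℝ)/5 ≤ 1 + t*p + (t^2-2)*(p^4 - 6*p^2*s^2 + s^4) := by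
          have h1 : 0 ≤ (t+2)*p := mul_nonneg (by nlinarith [sq_nonneg (t+2)]) hp
          have h2 : 0 ≤ (t^2-2)*((p^4 - 6*p^2*s^2 + s^4) + (p^2+s^2)^2) := by
            apply mul_nonneg (by linarith)
            nlinarith [sq_nonneg (p^2-s^2)]
          have hs2 : s^2 ≤ (1/5)^2 := pow_le_pow_left₀ hs hs5 2
          have hp2 : p^2 ≤ s^2 := pow_le_pow_left₀ hp hps 2
          have hsum : p^2+s^2 ≤ 2*(1/5)^2 := by linarith
          have h3 : (p^2+s^2)^2 ≤ (2*(1/5)^2)^2 :=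
            pow_le_pow_left₀ (by positivity) hsum 2
          nlinarith [h1, h2, h3, sq_nonneg (p^2+s^2)]
        nlinarith [hRE, sq_nonneg (t*s + (t^2-2)*(4*p*s*(p^2-s^2))),
          sq_nonneg (1 + t*p + (t^2-2)*(p^4 - 6*p^2*s^2 + s^4) - 1/5)]
      · have hIM : t*s + (t^2-2)*(4*p*s*(p^2-s^2)) ≤ -(1/5) := by
          have h1 : t*s ≤ -s := by nlinarith
          have h2 : (t^2-2)*(4*p*s*(p^2-s^2)) ≤ 0 := by
            apply mul_nonpos_of_nonneg_of_nonpos (by linarith)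
            apply mul_nonpos_of_nonneg_of_nonpos (by positivity)
            nlinarith
          linarith
        nlinarith [hIM, sq_nonneg (1 + t*p + (t^2-2)*(p^4 - 6*p^2*s^2 + s^4)),
          sq_nonneg (t*s + (t^2-2)*(4*p*s*(p^2-s^2)) + 1/5)]

lemma coreReal (p s t : ℝ) (hps : 0 ≤ p*s) (hp2 : p^2 ≤ s^2) (hr : p^2+s^2 ≤ 3/5) (ht : t^2 ≤ 4) :
    1/25 ≤ (1 + t*p + (t^2-2)*(p^4 - 6*p^2*s^2 + s^4))^2
         + (t*s + (t^2-2)*(4*p*s*(p^2-s^2)))^2 := by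
  rcases le_total 0 s with hs | hs
  · have hp : 0 ≤ p := by
      rcases lt_or_ge p 0 with h | h
      · exfalso
        have h1 : p * s ≤ 0 := mul_nonpos_of_nonpos_of_nonneg h.le hs
        have h2 : p * s = 0 := le_antisymm h1 hps
        rcases mul_eq_zero.mp h2 with h3 | h3
        · exact absurd h3 (ne_of_lt h)
        · rw [h3] at hp2; nlinarith
      · exact h
    have hps' : p ≤ s := by nlinarith
    exact coreAux p s t hp hps' hr ht
  · have hp : p ≤ 0 := by
      rcases lt_or_ge 0 p with h | h
      · exfalso
        have h1 : p * s ≤ 0 := mul_nonpos_of_nonneg_of_nonpos h.le hs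
        have h2 : p * s = 0 := le_antisymm h1 hps
        rcases mul_eq_zero.mp h2 with h3 | h3
        · exact absurd h3 (ne_of_gt h)
        · rw [h3] at hp2; nlinarith
      · exact h
    have h := coreAux (-p) (-s) (-t) (by linarith) (by nlinarith) (by nlinarith) (by nlinarith)
    calc (1:ℝ)/25 ≤ _ := h
    _ = _ := by ring

lemma coreComplex (q w : ℂ) (t : ℝ) (hw : w^2 = q) (h1 : q.re ≤ 0) (h2 : 0 ≤ q.im)
    (hr : ‖q‖ ≤ 3/5) (ht : t^2 ≤ 4) :
    1/5 ≤ ‖1 + (t:ℂ)*w + ((t:ℂ)^2-2)*q^2‖ := by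
  set p := w.re with hp
  set s := w.im with hs
  set Z := 1 + (t:ℂ)*w + ((t:ℂ)^2-2)*q^2 with hZ
  have hqre : q.re = p*p - s*s := by rw [← hw]; simp [pow_two, Complex.mul_re, hp, hs]
  have hqim : q.im = p*s + s*p := by rw [← hw]; simp [pow_two, Complex.mul_im, hp, hs]
  have habsq : ‖q‖ = p^2 + s^2 := by
    rw [← hw, norm_pow, Complex.sq_norm, Complex.normSq_apply]; ring
  have e : Z = 1 + ((t:ℝ):ℂ)*w + (((t^2:ℝ)):ℂ)*(w*w*w*w) - ((2:ℝ):ℂ)*(w*w*w*w) := by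
    rw [hZ, ← hw]; push_cast; ring
  have hZre : Z.re = 1 + t*p + (t^2-2)*(p^4 - 6*p^2*s^2 + s^4) := by
    rw [e]
    simp only [Complex.add_re, Complex.add_im, Complex.sub_re, Complex.sub_im,
      Complex.mul_re, Complex.mul_im, Complex.one_re, Complex.one_im,
      Complex.ofReal_re, Complex.ofReal_im]
    ring
  have hZim : Z.im = t*s + (t^2-2)*(4*p*s*(p^2-s^2)) := by
    rw [e]
    simp only [Complex.add_re, Complex.add_im, Complex.sub_re, Complex.sub_im,
      Complex.mul_re, Complex.mul_im, Complex.one_re, Complex.one_im,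
      Complex.ofReal_re, Complex.ofReal_im]
    ring
  have key : 1/25 ≤ ‖Z‖ ^ 2 := by
    rw [Complex.sq_norm, Complex.normSq_apply, hZre, hZim]
    have h := coreReal p s t (by nlinarith) (by nlinarith) (by nlinarith) ht
    nlinarith [h]
  nlinarith [norm_nonneg Z, key]

lemma decomp (q x : ℂ) (hq : q ≠ 0) (hx : x ≠ 0) (hz : ‖q^5*x^2‖ = 1) :
    ∃ (t : ℝ) (w : ℂ), w^2 = q ∧ t^2 ≤ 4 ∧
      1 + q*x + q^3*x^2 + q^6*x^3 + q^10*x^4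
        = q^3*x^2 * (1 + (t:ℂ)*w + ((t:ℂ)^2-2)*q^2) := by
  set z := q^5*x^2 with hzdef
  have hzc : z * (starRingEnd ℂ) z = 1 := by
    rw [Complex.mul_conj, ← Complex.sq_norm, hz]
    norm_num
  by_cases h1z : (1 : ℂ) + z = 0
  · refine ⟨0, q ^ ((2:ℕ):ℂ)⁻¹, Complex.cpow_nat_inv_pow q two_ne_zero, by norm_num, ?_⟩
    push_cast
    rw [hzdef] at h1z
    linear_combination (1 + q*x + q^5*x^2) * h1z
  · set t := ‖1+z‖ with htdef
    have htpos : 0 < t := by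
      rw [htdef]; exact norm_pos_iff.mpr h1z
    have ht2c : ((t:ℝ):ℂ)^2 = (1+z) * (1 + (starRingEnd ℂ) z) := by
      have h1 : ((t:ℝ):ℂ)^2 = ((t^2 : ℝ) : ℂ) := by push_cast; ring
      rw [h1, htdef, Complex.sq_norm, ← Complex.mul_conj, map_add, map_one]
    have ht4 : t^2 ≤ 4 := by
      have : t ≤ 2 := by
        rw [htdef]
        calc ‖1+z‖ ≤ ‖(1:ℂ)‖ + ‖z‖ := norm_add_le 1 z
        _ = 2 := by rw [norm_one, hz]; norm_num
      nlinarith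
    have htc : (t:ℂ) ≠ 0 := by exact_mod_cast ne_of_gt htpos
    have hqx : q^2*x ≠ 0 := by simp [hq, hx]
    have hden : (q^2*x*(t:ℂ)) ≠ 0 := mul_ne_zero hqx htc
    refine ⟨t, (1+z)/(q^2*x*(t:ℂ)), ?_, ht4, ?_⟩
    · rw [div_pow, div_eq_iff (pow_ne_zero 2 hden)]
      linear_combination (-(1+z))*hzc + (-z)*ht2c + ((t:ℂ)^2)*hzdef
    · have hw : (t:ℂ) * ((1+z)/(q^2*x*(t:ℂ))) = (1+z)/(q^2*x) := by
        field_simp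
      rw [hw]
      have expand : q^3*x^2 * (1 + (1+z)/(q^2*x) + ((t:ℂ)^2-2)*q^2)
          = q^3*x^2 + q*x*(1+z) + q^5*x^2*((t:ℂ)^2) - 2*(q^5*x^2) := by
        field_simp; ring
      rw [expand]
      linear_combination (-(q*x + q^5*x^2 + z - (t:ℂ)^2 + 2)) * hzdef
        + (-(1+z))*hzc + (-z)*ht2c

/-- The partial theta function `θ(q,x) = Σ_{j≥0} q^(j(j+1)/2) x^j`. -/
noncomputable def theta (q x : ℂ) : ℂ := ∑' j : ℕ, q ^ (j * (j + 1) / 2) * x ^ j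

/-- The argument of a complex number, normalized to take values in `[0, 2π)`. -/
noncomputable def argTwoPi (z : ℂ) : ℝ :=
  if Complex.arg z < 0 then Complex.arg z + 2 * Real.pi else Complex.arg z

set_option maxHeartbeats 1000000 in
theorem theta_ne_zero_circle52_left (q : ℂ) (hq : 0 < ‖q‖ ∧ ‖q‖ < 0.6)
    (harg : argTwoPi q ∈ Set.Icc (Real.pi / 2) (Real.pi)) (x : ℂ)
    (hx : ‖x‖ = ‖q‖ ^ (-(5 : ℝ) / 2 : ℝ)) :
    theta q x ≠ 0 := by
  obtain ⟨hq0, hq6⟩ := hq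
  obtain ⟨harg1, harg2⟩ := harg
  have hqne : q ≠ 0 := by
    intro h; rw [h] at hq0; simp at hq0
  set R := ‖q‖ with hRdef
  have hR1 : R < 3/5 := by rw [hRdef]; norm_num at hq6 ⊢; exact hq6
  -- argument facts
  have hargnn : 0 ≤ Complex.arg q := by
    by_contra hneg
    push_neg at hneg
    have h2 : argTwoPi q = Complex.arg q + 2*Real.pi := by
      rw [argTwoPi, if_pos hneg]
    have h3 := Complex.neg_pi_lt_arg q
    rw [h2] at harg2
    linarith
  have hargeq : argTwoPi q = Complex.arg q := by
    rw [argTwoPi, if_neg (not_lt.mpr hargnn)]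
  rw [hargeq] at harg1 harg2
  have him : 0 ≤ q.im := Complex.arg_nonneg_iff.mp hargnn
  have hre : q.re ≤ 0 := by
    have hcos : Real.cos (Complex.arg q) ≤ 0 :=
      Real.cos_nonpos_of_pi_div_two_le_of_le harg1 (by linarith [Real.pi_pos])
    rw [Complex.cos_arg hqne] at hcos
    by_contra hpos
    push_neg at hpos
    have := div_pos hpos hq0
    linarith
  -- setup Y = sqrt R
  set Y := Real.sqrt R with hYdef
  have hYpos : 0 < Y := Real.sqrt_pos.mpr hq0
  have hY2 : Y^2 = R := Real.sq_sqrt hq0.le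
  have hY2lt : Y^2 < 3/5 := by rw [hY2]; exact hR1
  have hYlt1 : Y < 1 := by nlinarith
  have hY6lt1 : Y^6 < 1 := pow_lt_one₀ hYpos.le hYlt1 (by norm_num)
  have hxabs : ‖x‖ = (Y^5)⁻¹ := by
    rw [hx]
    have h1 : R ^ (-(5:ℝ)/2 : ℝ) = (R ^ ((5:ℝ)/2 : ℝ))⁻¹ := by
      rw [← Real.rpow_neg hq0.le]; norm_num
    have h2 : R ^ ((5:ℝ)/2 : ℝ) = Y^5 := by
      rw [hYdef, Real.sqrt_eq_rpow, ← Real.rpow_natCast (R ^ ((1:ℝ)/2)) 5,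
        ← Real.rpow_mul hq0.le]
      norm_num
    rw [h1, h2]
  have hxne : x ≠ 0 := by
    intro h
    rw [h] at hxabs
    simp at hxabs
    have := pow_pos hYpos 5
    rw [← hxabs] at this
    simp at this
  -- the series
  set f : ℕ → ℂ := fun j => q ^ (j * (j + 1) / 2) * x ^ j with hfdef
  have habsf : ∀ j : ℕ, ‖f j‖ = Y^(j*(j+1)) * ((Y^5)⁻¹)^j := by
    intro j
    have hdvd : 2 ∣ j*(j+1) := even_iff_two_dvd.mp (Nat.even_mul_succ_self j)
    have hexp : j*(j+1)/2*2 = j*(j+1) := Nat.div_mul_cancel hdvd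
    have key : R^(j*(j+1)/2) = Y^(j*(j+1)) := by
      obtain ⟨m, hm⟩ := hdvd
      rw [hm, Nat.mul_div_cancel_left m (by norm_num : 0 < 2), ← hY2, ← pow_mul]
    rw [hfdef]
    simp only [norm_mul, norm_pow]
    rw [← hRdef, hxabs, key]
  have habs_tail : ∀ k : ℕ, ‖f (k+5)‖ ≤ Y^5 * (Y^6)^k := by
    intro k
    rw [habsf (k+5)]
    have hYne : Y^5 ≠ 0 := ne_of_gt (pow_pos hYpos 5)
    have e1 : (k+5)*((k+5)+1) = (k^2+6*k+5) + 5*(k+5) := by ring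
    have e2 : Y^((k+5)*((k+5)+1)) = Y^(k^2+6*k+5) * Y^(5*(k+5)) := by
      rw [← pow_add, e1]
    have e3 : ((Y^5)⁻¹)^(k+5) = (Y^(5*(k+5)))⁻¹ := by
      rw [inv_pow, ← pow_mul]
    rw [e2, e3, mul_assoc, mul_inv_cancel₀ (ne_of_gt (pow_pos hYpos (5*(k+5)))), mul_one]
    calc Y^(k^2+6*k+5) ≤ Y^(6*k+5) := by
          apply pow_le_pow_of_le_one hYpos.le hYlt1.le
          omega
    _ = Y^5 * (Y^6)^k := by rw [← pow_mul, ← pow_add]; ring_nf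
  have hgeo : Summable (fun k : ℕ => Y^5 * (Y^6)^k) :=
    (summable_geometric_of_lt_one (by positivity) hY6lt1).mul_left _
  have hsum_tail : Summable (fun k => f (k+5)) := by
    apply Summable.of_norm_bounded hgeo
    intro k
    exact habs_tail k
  have hsumf : Summable f := (summable_nat_add_iff 5).mp hsum_tail
  have hsplit : theta q x = (∑ i ∈ Finset.range 5, f i) + ∑' k, f (k+5) := by
    rw [theta]
    exact (Summable.sum_add_tsum_nat_add 5 hsumf).symm
  -- tail bound
  have hsum_norm : Summable (fun k => ‖f (k+5)‖) := by
    apply Summable.of_nonneg_of_le (fun k => norm_nonneg _) _ hgeo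
    intro k
    exact habs_tail k
  have hT : ‖∑' k, f (k+5)‖ ≤ Y^5 * (1-Y^6)⁻¹ := by
    calc ‖∑' k, f (k+5)‖ ≤ ∑' k, ‖f (k+5)‖ := norm_tsum_le_tsum_norm hsum_norm
    _ ≤ ∑' k : ℕ, Y^5 * (Y^6)^k := by
        apply Summable.tsum_le_tsum _ hsum_norm hgeo
        intro k
        exact habs_tail k
    _ = Y^5 * ∑' k : ℕ, (Y^6)^k := tsum_mul_left
    _ = Y^5 * (1-Y^6)⁻¹ := by
        rw [tsum_geometric_of_lt_one (by positivity) hY6lt1]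
  -- head: decomposition and core bound
  have hz1 : ‖q^5*x^2‖ = 1 := by
    rw [norm_mul, norm_pow, norm_pow, ← hRdef, hxabs, ← hY2]
    field_simp
  obtain ⟨t, w, hw2, ht4, hdec⟩ := decomp q x hqne hxne hz1
  have hcore : 1/5 ≤ ‖1 + (t:ℂ)*w + ((t:ℂ)^2-2)*q^2‖ :=
    coreComplex q w t hw2 hre him (by rw [← hRdef]; linarith) ht4
  have hS : (∑ i ∈ Finset.range 5, f i) = 1 + q*x + q^3*x^2 + q^6*x^3 + q^10*x^4 := by
    rw [hfdef]
    rw [Finset.sum_range_succ, Finset.sum_range_succ, Finset.sum_range_succ,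
      Finset.sum_range_succ, Finset.sum_range_succ, Finset.sum_range_zero]
    norm_num
  have habsq3x2 : ‖q^3*x^2‖ = (Y^4)⁻¹ := by
    rw [norm_mul, norm_pow, norm_pow, ← hRdef, hxabs, ← hY2]
    have hYne : Y ≠ 0 := ne_of_gt hYpos
    field_simp
  have hSbound : (1/5) * (Y^4)⁻¹ ≤ ‖∑ i ∈ Finset.range 5, f i‖ := by
    rw [hS, hdec, norm_mul, habsq3x2]
    rw [mul_comm]
    apply mul_le_mul_of_nonneg_left hcore (by positivity)
  -- final arithmetic
  have hY78 : Y ≤ 39/50 := by nlinarith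
  have hY6 : Y^6 < 27/125 := by
    calc Y^6 = (Y^2)^3 := by ring
    _ < (3/5)^3 := pow_lt_pow_left₀ hY2lt (sq_nonneg Y) (by norm_num)
    _ = 27/125 := by norm_num
  have hY8 : Y^8 < 81/625 := by
    calc Y^8 = (Y^2)^4 := by ring
    _ < (3/5)^4 := pow_lt_pow_left₀ hY2lt (sq_nonneg Y) (by norm_num)
    _ = 81/625 := by norm_num
  have hkey : 5*Y^9 < 1 - Y^6 := by
    have h9 : Y^9 < 81/625 * (39/50) := by
      calc Y^9 = Y^8 * Y := by ring
      _ ≤ Y^8 * (39/50) := mul_le_mul_of_nonneg_left hY78 (by positivity)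
      _ < 81/625 * (39/50) := by
          apply mul_lt_mul_of_pos_right hY8 (by norm_num)
    linarith
  have hpos1 : (0:ℝ) < 1 - Y^6 := by linarith
  have hfinal : Y^5 * (1-Y^6)⁻¹ < (1/5) * (Y^4)⁻¹ := by
    rw [← div_eq_mul_inv, ← div_eq_mul_inv, div_lt_div_iff₀ hpos1 (by positivity)]
    nlinarith [hkey]
  -- conclude
  have hpos : 0 < ‖theta q x‖ := by
    rw [hsplit]
    have htri : ‖∑ i ∈ Finset.range 5, f i‖ - ‖∑' k, f (k+5)‖
        ≤ ‖(∑ i ∈ Finset.range 5, f i) + ∑' k, f (k+5)‖ := by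
      calc ‖∑ i ∈ Finset.range 5, f i‖ - ‖∑' k, f (k+5)‖
          = ‖∑ i ∈ Finset.range 5, f i‖ - ‖-(∑' k, f (k+5))‖ := by rw [norm_neg]
      _ ≤ ‖(∑ i ∈ Finset.range 5, f i) - -(∑' k, f (k+5))‖ := norm_sub_norm_le _ _
      _ = ‖(∑ i ∈ Finset.range 5, f i) + ∑' k, f (k+5)‖ := by rw [sub_neg_eq_add]
    linarith
  intro h
  rw [h] at hpos
  simp at hpos
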